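/- Let α > −1, b > 1, and β = (2/π)·arccos(1/b) ∈ (0,1). There exist a holomorphic map φ : 𝔻 → 𝔻 with φ(𝔻) ⊆ Γ(1,b), a constant C > 0 and h₀ ∈ (0,1) such that v_α(φ⁻¹(S(1,h))) ≥ C·h^{(2+α)/β} for every 0 < h < h₀. -/

import Mathlib

/-!
In the coordinate `ζ = (1 - w)⁻¹` the region `Γ(1,b)` becomes `{‖ζ‖ < b (Re ζ - 1/2)}`, which
contains the translate by `b / (b - 1)` of the closed sector `{‖ζ‖ ≤ b Re ζ}` of half-angle
`arccos (1/b) = βπ/2`. Since `z ↦ (1 - z)^(-β)` maps `𝔻` into that sector, the map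
`φ z = 1 - ((1 - z)^(-β) + b / (b - 1))⁻¹` sends `𝔻` into `Γ(1,b)`, and `|1 - φ z| ≤ b |1 - z|^β`.
Hence `φ⁻¹(S(1,h))` contains `S(1,r)` for `r = (h/b)^(1/β)`, and `S(1,r)` contains a disc of
radius `r/4` on which `1 - |z|²` is comparable to `r`, so its `v_α`-measure is `≳ r^(2+α)`.
-/

open MeasureTheory Set Filter Metric

/-- The non-tangential (Stolz-type) approach region
`Γ(1,b) = {z ∈ 𝔻 : |1 − z| < (b/2)(1 − |z|²)}` at the point `1`. -/
def Koranyi (b : ℝ) : Set ℂ :=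
  {z : ℂ | ‖z‖ < 1 ∧ ‖1 - z‖ < b / 2 * (1 - ‖z‖ ^ 2)}

/-- The non-isotropic ball `S(1,h) = {z ∈ 𝔻 : |1 − z| < h}` at the point `1`. -/
def discS (h : ℝ) : Set ℂ :=
  {z : ℂ | ‖z‖ < 1 ∧ ‖1 - z‖ < h}

/-- The weighted measure `v_α = (1 − |z|²)^α dA(z)` on the unit disc `𝔻 ⊆ ℂ`. -/
noncomputable def vDisc (α : ℝ) : Measure ℂ :=
  (volume.restrict (Metric.ball (0:ℂ) 1)).withDensity
    fun z => ENNReal.ofReal ((1 - ‖z‖ ^ 2) ^ α)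

open Real

theorem Complex.norm_cpow_mul_cos_le_re_cpow {u : ℂ} (hu : 0 < u.re) {γ : ℝ} (hγ : |γ| ≤ 2) :
    ‖u ^ (γ : ℂ)‖ * Real.cos (γ * (π / 2)) ≤ (u ^ (γ : ℂ)).re := by
  rw [cpow_ofReal_re, norm_cpow_real]
  have harg : |u.arg| ≤ π / 2 := (abs_arg_lt_pi_div_two_iff.mpr (Or.inl hu)).le
  have hangle : |u.arg * γ| ≤ |γ| * (π / 2) := by
    rw [abs_mul, mul_comm]; exact mul_le_mul_of_nonneg_left harg (abs_nonneg γ)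
  gcongr
  rw [← cos_abs (u.arg * γ), ← cos_abs (γ * _), abs_mul, abs_of_pos (by positivity : 0 < π / 2)]
  exact cos_le_cos_of_nonneg_of_le_pi (abs_nonneg _) (by nlinarith [pi_pos]) hangle

theorem ne_zero_of_norm_lt_mul_re_sub_half {b : ℝ} (hb : 0 < b) {ζ : ℂ}
    (h : ‖ζ‖ < b * (ζ.re - 1 / 2)) : ζ ≠ 0 := by
  rintro rfl
  norm_num at h
  linarith

theorem one_sub_inv_mem_koranyi {b : ℝ} (hb : 0 < b) {ζ : ℂ} (h : ‖ζ‖ < b * (ζ.re - 1 / 2)) :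
    1 - ζ⁻¹ ∈ Koranyi b := by
  have hζ := ne_zero_of_norm_lt_mul_re_sub_half hb h
  have hnorm : 0 < ‖ζ‖ := norm_pos_iff.mpr hζ
  have hdefect : 1 - ‖1 - ζ⁻¹‖ ^ 2 = (2 * ζ.re - 1) / ‖ζ‖ ^ 2 := by
    have hsub : ‖ζ - 1‖ ^ 2 = ‖ζ‖ ^ 2 - 2 * ζ.re + 1 := by
      simp only [Complex.sq_norm, Complex.normSq_apply, Complex.sub_re, Complex.sub_im,
        Complex.one_re, Complex.one_im]
      ring
    rw [show 1 - ζ⁻¹ = (ζ - 1) / ζ by field_simp, norm_div, div_pow, hsub]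
    field_simp
    ring
  refine ⟨?_, ?_⟩
  · have : 0 < 1 - ‖1 - ζ⁻¹‖ ^ 2 := by rw [hdefect]; apply div_pos <;> nlinarith
    nlinarith [norm_nonneg (1 - ζ⁻¹)]
  · rw [sub_sub_cancel, norm_inv, hdefect, inv_eq_one_div, div_lt_iff₀ hnorm]
    field_simp
    nlinarith

theorem norm_add_lt_of_norm_le_mul_re {b : ℝ} (hb : 1 < b) {ζ : ℂ} (h : ‖ζ‖ ≤ b * ζ.re) :
    ‖ζ + (b / (b - 1) : ℝ)‖ < b * ((ζ + (b / (b - 1) : ℝ)).re - 1 / 2) := by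
  have hc : b / (b - 1) * (b - 1) = b := div_mul_cancel₀ b (by linarith)
  calc ‖ζ + (b / (b - 1) : ℝ)‖ ≤ ‖ζ‖ + b / (b - 1) := by
        grw [norm_add_le, Complex.norm_real,
          Real.norm_of_nonneg (div_pos (by linarith) (by linarith)).le]
    _ < b * ((ζ + (b / (b - 1) : ℝ)).re - 1 / 2) := by
        rw [Complex.add_re, Complex.ofReal_re]; nlinarith

theorem norm_inv_add_le_of_norm_le_mul_re {b c : ℝ} (hb : 0 < b) (hc : 0 ≤ c) {ζ : ℂ}
    (hζ : ζ ≠ 0) (h : ‖ζ‖ ≤ b * ζ.re) : ‖(ζ + c)⁻¹‖ ≤ b / ‖ζ‖ := by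
  have hnorm : 0 < ‖ζ‖ := norm_pos_iff.mpr hζ
  have hre : ‖ζ‖ / b ≤ (ζ + c).re := by
    rw [Complex.add_re, Complex.ofReal_re, div_le_iff₀ hb]; nlinarith
  rw [norm_inv, ← inv_div]
  gcongr
  exact hre.trans (Complex.re_le_norm _)

noncomputable def stolzMap (b β : ℝ) (z : ℂ) : ℂ :=
  1 - ((1 - z) ^ ((-β : ℝ) : ℂ) + (b / (b - 1) : ℝ))⁻¹

section stolzMap

variable {b β : ℝ} {z : ℂ}

theorem re_one_sub_pos (hz : ‖z‖ < 1) : 0 < (1 - z).re := by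
  rw [Complex.sub_re, Complex.one_re]; linarith [Complex.re_le_norm z]

theorem norm_le_mul_re_cpow_neg (hb : 0 < b) (hcos : Real.cos (β * (π / 2)) = b⁻¹)
    (hβ : |β| ≤ 2) (hz : ‖z‖ < 1) :
    ‖(1 - z) ^ ((-β : ℝ) : ℂ)‖ ≤ b * ((1 - z) ^ ((-β : ℝ) : ℂ)).re := by
  have := Complex.norm_cpow_mul_cos_le_re_cpow (re_one_sub_pos hz) (γ := -β) (by rwa [abs_neg])
  rw [neg_mul, Real.cos_neg, hcos] at this
  calc _ = b * (‖(1 - z) ^ ((-β : ℝ) : ℂ)‖ * b⁻¹) := by field_simp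
    _ ≤ _ := by gcongr

theorem stolzMap_mem_koranyi (hb : 1 < b) (hcos : Real.cos (β * (π / 2)) = b⁻¹)
    (hβ : |β| ≤ 2) (hz : ‖z‖ < 1) : stolzMap b β z ∈ Koranyi b :=
  one_sub_inv_mem_koranyi (by linarith) <|
    norm_add_lt_of_norm_le_mul_re hb (norm_le_mul_re_cpow_neg (by linarith) hcos hβ hz)

theorem norm_one_sub_stolzMap_le (hb : 1 < b) (hcos : Real.cos (β * (π / 2)) = b⁻¹)
    (hβ : |β| ≤ 2) (hz : ‖z‖ < 1) : ‖1 - stolzMap b β z‖ ≤ b * ‖1 - z‖ ^ β := by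
  have hu : 1 - z ≠ 0 := fun h => by simpa [h] using re_one_sub_pos hz
  rw [stolzMap, sub_sub_cancel]
  refine (norm_inv_add_le_of_norm_le_mul_re (by linarith) (div_pos (by linarith) (by linarith)).le
    ?_ (norm_le_mul_re_cpow_neg (by linarith) hcos hβ hz)).trans_eq ?_
  · simp [Complex.cpow_eq_zero_iff, hu]
  · rw [Complex.norm_cpow_real, Real.rpow_neg (norm_nonneg _), div_inv_eq_mul]

theorem differentiableOn_stolzMap (hb : 1 < b) (hcos : Real.cos (β * (π / 2)) = b⁻¹)
    (hβ : |β| ≤ 2) : DifferentiableOn ℂ (stolzMap b β) (ball 0 1) := by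
  intro z hz
  rw [mem_ball_zero_iff] at hz
  have hpow : DifferentiableAt ℂ (fun z : ℂ => (1 - z) ^ ((-β : ℝ) : ℂ)) z :=
    ((differentiableAt_const 1).sub differentiableAt_id).cpow_const (Or.inl (re_one_sub_pos hz))
  have hne : (1 - z) ^ ((-β : ℝ) : ℂ) + (b / (b - 1) : ℝ) ≠ 0 :=
    ne_zero_of_norm_lt_mul_re_sub_half (by linarith) <|
      norm_add_lt_of_norm_le_mul_re hb (norm_le_mul_re_cpow_neg (by linarith) hcos hβ hz)
  exact ((differentiableAt_const 1).sub ((hpow.add_const _).inv hne)).differentiableWithinAt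

end stolzMap

theorem two_rpow_neg_abs_mul_rpow_le {r x : ℝ} (hr : 0 < r) (hx : x ∈ Icc (r / 2) (2 * r))
    (α : ℝ) : 2 ^ (-|α|) * r ^ α ≤ x ^ α := by
  rcases le_total 0 α with hα | hα
  · calc 2 ^ (-|α|) * r ^ α = (r / 2) ^ α := by
          rw [abs_of_nonneg hα, Real.div_rpow hr.le zero_le_two, Real.rpow_neg zero_le_two]
          ring
      _ ≤ x ^ α := Real.rpow_le_rpow (by positivity) hx.1 hα
  · calc 2 ^ (-|α|) * r ^ α = (2 * r) ^ α := by
          rw [abs_of_nonpos hα, neg_neg, Real.mul_rpow zero_le_two hr.le]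
      _ ≤ x ^ α := Real.rpow_le_rpow_of_nonpos ((half_pos hr).trans_le hx.1) hx.2 hα

theorem ofReal_mul_volume_le_vDisc {α m : ℝ} {E : Set ℂ} (hE : MeasurableSet E)
    (hsub : E ⊆ ball 0 1) (hm : ∀ z ∈ E, m ≤ (1 - ‖z‖ ^ 2) ^ α) :
    ENNReal.ofReal m * volume E ≤ vDisc α E := by
  rw [vDisc, withDensity_apply _ hE, Measure.restrict_restrict hE,
    inter_eq_self_of_subset_left hsub, ← setLIntegral_const]
  exact setLIntegral_mono' hE fun z hz => ENNReal.ofReal_le_ofReal (hm z hz)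

section boundaryBall

variable {r : ℝ} {z : ℂ}

theorem mem_discS_and_one_sub_sq_mem_Icc (hr0 : 0 < r) (hr1 : r < 1)
    (hz : z ∈ ball ((1 - 3 * r / 4 : ℝ) : ℂ) (r / 4)) :
    z ∈ discS r ∧ 1 - ‖z‖ ^ 2 ∈ Icc (r / 2) (2 * r) := by
  rw [mem_ball, dist_eq_norm] at hz
  have hnorm := abs_norm_sub_norm_le z ((1 - 3 * r / 4 : ℝ) : ℂ)
  rw [Complex.norm_real, Real.norm_of_nonneg (by linarith), abs_le] at hnorm
  have hone : ‖1 - z‖ ≤ 3 * r / 4 + ‖z - ((1 - 3 * r / 4 : ℝ) : ℂ)‖ := by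
    calc ‖1 - z‖ = ‖((3 * r / 4 : ℝ) : ℂ) - (z - ((1 - 3 * r / 4 : ℝ) : ℂ))‖ := by
          push_cast; ring_nf
      _ ≤ _ := by
          grw [norm_sub_le, Complex.norm_real, Real.norm_of_nonneg (by linarith)]
  refine ⟨⟨by linarith, by linarith⟩, by constructor <;> nlinarith⟩

theorem ofReal_le_vDisc_discS (α : ℝ) (hr0 : 0 < r) (hr1 : r < 1) :
    ENNReal.ofReal (2 ^ (-|α|) * (π / 16) * r ^ (2 + α)) ≤ vDisc α (discS r) := by
  set E := ball ((1 - 3 * r / 4 : ℝ) : ℂ) (r / 4)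
  have hE : ∀ z ∈ E, z ∈ discS r ∧ 1 - ‖z‖ ^ 2 ∈ Icc (r / 2) (2 * r) :=
    fun z hz => mem_discS_and_one_sub_sq_mem_Icc hr0 hr1 hz
  have hEdisc : E ⊆ discS r := fun z hz => (hE z hz).1
  have hEball : E ⊆ ball 0 1 := fun z hz => mem_ball_zero_iff.mpr (hE z hz).1.1
  calc ENNReal.ofReal (2 ^ (-|α|) * (π / 16) * r ^ (2 + α))
      = ENNReal.ofReal (2 ^ (-|α|) * r ^ α) * volume E := by
        rw [Complex.volume_ball, ← ENNReal.ofReal_pow (by positivity),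
          ← ENNReal.ofReal_coe_nnreal, NNReal.coe_real_pi, ← ENNReal.ofReal_mul (by positivity),
          ← ENNReal.ofReal_mul (by positivity), Real.rpow_add hr0, Real.rpow_two]
        ring_nf
    _ ≤ vDisc α E := ofReal_mul_volume_le_vDisc measurableSet_ball hEball
        fun z hz => two_rpow_neg_abs_mul_rpow_le hr0 (hE z hz).2 α
    _ ≤ vDisc α (discS r) := measure_mono hEdisc

end boundaryBall

theorem ofReal_le_vDisc_preimage_discS {α β K : ℝ} (hβ : 0 < β) (hK : 0 < K) {φ : ℂ → ℂ}
    (hmaps : ∀ z, ‖z‖ < 1 → ‖φ z‖ < 1) (hest : ∀ z, ‖z‖ < 1 → ‖1 - φ z‖ ≤ K * ‖1 - z‖ ^ β)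
    {h : ℝ} (h0 : 0 < h) (hK' : h < K) :
    ENNReal.ofReal (2 ^ (-|α|) * (π / 16) / K ^ ((2 + α) / β) * h ^ ((2 + α) / β)) ≤
      vDisc α (φ ⁻¹' discS h) := by
  set r := (h / K) ^ β⁻¹
  have hr0 : 0 < r := by positivity
  have hr1 : r < 1 := Real.rpow_lt_one (by positivity) ((div_lt_one hK).mpr hK') (by positivity)
  have hKr : K * r ^ β = h := by
    rw [← Real.rpow_mul (by positivity), inv_mul_cancel₀ hβ.ne', Real.rpow_one]; field_simp
  have hsub : discS r ⊆ φ ⁻¹' discS h := fun z ⟨hz, hzr⟩ => ⟨hmaps z hz, by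
    calc ‖1 - φ z‖ ≤ K * ‖1 - z‖ ^ β := hest z hz
      _ < K * r ^ β := by gcongr
      _ = h := hKr⟩
  calc ENNReal.ofReal (2 ^ (-|α|) * (π / 16) / K ^ ((2 + α) / β) * h ^ ((2 + α) / β))
      = ENNReal.ofReal (2 ^ (-|α|) * (π / 16) * r ^ (2 + α)) := by
        rw [← Real.rpow_mul (by positivity), inv_mul_eq_div, Real.div_rpow h0.le hK.le]
        ring_nf
    _ ≤ vDisc α (discS r) := ofReal_le_vDisc_discS α hr0 hr1
    _ ≤ vDisc α (φ ⁻¹' discS h) := measure_mono hsub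

theorem stmt9_general (α b β : ℝ) (hb : 1 < b)
    (hβdef : β = 2 / Real.pi * Real.arccos (1 / b)) (hβmem : β ∈ Ioo (0:ℝ) 1) :
    ∃ φ : ℂ → ℂ, DifferentiableOn ℂ φ (Metric.ball 0 1) ∧
      MapsTo φ (Metric.ball 0 1) (Koranyi b) ∧
      ∃ C > (0:ℝ), ∃ h₀ ∈ Ioo (0:ℝ) 1, ∀ h : ℝ, 0 < h → h < h₀ →
        ENNReal.ofReal (C * h ^ ((2 + α) / β)) ≤ vDisc α (φ ⁻¹' discS h) := by
  have hcos : Real.cos (β * (π / 2)) = b⁻¹ := by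
    have hinv : b⁻¹ ≤ 1 := inv_le_one_of_one_le₀ hb.le
    rw [hβdef, one_div, show 2 / π * Real.arccos b⁻¹ * (π / 2) = Real.arccos b⁻¹ by field_simp,
      Real.cos_arccos (by linarith [inv_pos.mpr (zero_lt_one.trans hb)]) hinv]
  have hβ : |β| ≤ 2 := by rw [abs_of_pos hβmem.1]; linarith [hβmem.2]
  have hmem (z : ℂ) (hz : ‖z‖ < 1) := stolzMap_mem_koranyi hb hcos hβ hz
  refine ⟨stolzMap b β, differentiableOn_stolzMap hb hcos hβ,
    fun z hz => hmem z (mem_ball_zero_iff.mp hz), 2 ^ (-|α|) * (π / 16) / b ^ ((2 + α) / β),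
    by positivity, 1 / 2, by norm_num, fun h h0 hh => ?_⟩
  exact ofReal_le_vDisc_preimage_discS hβmem.1 (by linarith) (fun z hz => (hmem z hz).1)
    (fun z hz => norm_one_sub_stolzMap_le hb hcos hβ hz) h0 (by linarith)

/-- for `α > −1`, `b > 1` and `β = (2/π) arccos(1/b) ∈ (0,1)`, there is a
holomorphic `φ : 𝔻 → 𝔻` with range in `Γ(1,b)` and constants `C > 0`, `h₀ ∈ (0,1)` such
that `v_α(φ⁻¹(S(1,h))) ≥ C h^{(2+α)/β}` for every `0 < h < h₀`. -/
theorem stmt9 (α b β : ℝ) (hα : -1 < α) (hb : 1 < b)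
    (hβdef : β = 2 / Real.pi * Real.arccos (1 / b)) (hβmem : β ∈ Ioo (0:ℝ) 1) :
    ∃ φ : ℂ → ℂ, DifferentiableOn ℂ φ (Metric.ball 0 1) ∧
      MapsTo φ (Metric.ball 0 1) (Koranyi b) ∧
      ∃ C > (0:ℝ), ∃ h₀ ∈ Ioo (0:ℝ) 1, ∀ h : ℝ, 0 < h → h < h₀ →
        ENNReal.ofReal (C * h ^ ((2 + α) / β)) ≤ vDisc α (φ ⁻¹' discS h) :=
  stmt9_general α b β hb hβdef hβmem
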